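/- Let F be a field of characteristic p, G a finite group, P a p-subgroup, and i a primitive idempotent of (FG)^P. Then the F[G × P]-module FGi, where G acts by left translation and P by right translation, is indecomposable. -/

import Mathlib

/-- An idempotent is primitive if it is nonzero and cannot be written as a sum of two
nonzero orthogonal idempotents. -/
def IsPrimitiveIdempotent {R : Type} [Ring R] (e : R) : Prop :=
  IsIdempotentElem e ∧ e ≠ 0 ∧
    ∀ a b : R, IsIdempotentElem a → IsIdempotentElem b → a * b = 0 → b * a = 0 →
      e = a + b → a = 0 ∨ b = 0

/-- The fixed-point subalgebra `(FG)^P` of the group algebra under conjugation by `P`. -/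
def FixedSub (F G : Type) [Field F] [Group G] (P : Subgroup G) :
    Subalgebra F (MonoidAlgebra F G) where
  carrier := {x | ∀ u ∈ P, MonoidAlgebra.of F G u * x = x * MonoidAlgebra.of F G u}
  mul_mem' := by
    intro a b ha hb u hu
    rw [← mul_assoc, ha u hu, mul_assoc, hb u hu, mul_assoc]
  add_mem' := by
    intro a b ha hb u hu
    rw [mul_add, add_mul, ha u hu, hb u hu]
  algebraMap_mem' := by
    intro r u hu
    exact (Algebra.commutes r (MonoidAlgebra.of F G u)).symm

/-- The representation of `G × P` on `FG` by left and right translations: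
`(g, u) • x = g x u⁻¹`. -/
noncomputable def bimodRep (F G : Type) [Field F] [Group G] (P : Subgroup G) :
    Representation F (G × P) (MonoidAlgebra F G) where
  toFun z := (LinearMap.mulLeft F (MonoidAlgebra.of F G z.1)).comp
      (LinearMap.mulRight F (MonoidAlgebra.of F G ((z.2 : G)⁻¹)))
  map_one' := by
    ext x
    simp
  map_mul' z w := by
    ext x
    simp [mul_assoc, mul_inv_rev]

/-- A module is indecomposable if it is nonzero and admits no nontrivial direct sum
decomposition. -/
def IsIndecomposableModule (R M : Type) [Ring R] [AddCommMonoid M] [Module R M] : Prop :=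
  (∃ x : M, x ≠ 0) ∧ ∀ N₁ N₂ : Submodule R M, IsCompl N₁ N₂ → N₁ = ⊥ ∨ N₂ = ⊥

/-!
An idempotent endomorphism `f` of the cyclic `F[G × P]`-module generated by `i` is determined by
`a = f(i) ∈ FG`. Compatibility of `f` with left multiplication by `FG`, with right multiplication
by `i` and with conjugation by `P` shows that `a` is an idempotent of `(FG)^P` with
`a i = i a = a`. Then `a` and `i - a` are orthogonal idempotents of `(FG)^P` summing to `i`, so
primitivity forces `a = 0` or `a = i`, that is `f = 0` or `f = 1`.
-/

open MonoidAlgebra Representation Submodule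

section Indecomposable

variable {R M : Type} [Ring R] [AddCommGroup M] [Module R M]

theorem isIndecomposableModule_of_forall_isIdempotentElem (hM : ∃ x : M, x ≠ 0)
    (h : ∀ f : Module.End R M, IsIdempotentElem f → f = 0 ∨ f = 1) :
    IsIndecomposableModule R M := by
  refine ⟨hM, fun N₁ N₂ hN => ?_⟩
  rcases h _ (isIdempotentElem_projection hN) with h0 | h1
  · left
    rw [← range_projection hN, h0, LinearMap.range_zero]
  · right
    rw [← ker_projection hN, h1, Module.End.one_eq_id, LinearMap.ker_id]

theorem LinearMap.ext_span_singleton {N : Type} [AddCommGroup N] [Module R N] {x : M}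
    {f g : span R {x} →ₗ[R] N}
    (h : f ⟨x, mem_span_singleton_self x⟩ = g ⟨x, mem_span_singleton_self x⟩) : f = g := by
  ext ⟨y, hy⟩
  obtain ⟨r, rfl⟩ := mem_span_singleton.mp hy
  change f (r • ⟨x, mem_span_singleton_self x⟩) = g (r • ⟨x, mem_span_singleton_self x⟩)
  rw [map_smul, map_smul, h]

theorem isIndecomposableModule_span_singleton {x : M} (hx : x ≠ 0)
    (h : ∀ f : Module.End R (span R {x}), IsIdempotentElem f →
      f ⟨x, mem_span_singleton_self x⟩ = 0 ∨
        f ⟨x, mem_span_singleton_self x⟩ = ⟨x, mem_span_singleton_self x⟩) :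
    IsIndecomposableModule R (span R {x}) := by
  refine isIndecomposableModule_of_forall_isIdempotentElem
    ⟨⟨x, mem_span_singleton_self x⟩, fun h0 => hx congr(Subtype.val $h0)⟩ fun f hf => ?_
  exact (h f hf).imp LinearMap.ext_span_singleton LinearMap.ext_span_singleton

end Indecomposable

theorem IsPrimitiveIdempotent.eq_zero_or_eq {R : Type} [Ring R] {e a : R}
    (he : IsPrimitiveIdempotent e) (ha : IsIdempotentElem a) (hae : a * e = a)
    (hea : e * a = a) : a = 0 ∨ a = e := by
  have hb : IsIdempotentElem (e - a) := by
    rw [IsIdempotentElem, mul_sub, sub_mul, sub_mul, he.1.eq, hea, hae, ha.eq]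
    abel
  refine (he.2.2 a (e - a) ha hb (by rw [mul_sub, hae, ha.eq, sub_self])
    (by rw [sub_mul, hea, ha.eq, sub_self]) (add_sub_cancel a e).symm).imp id fun h => ?_
  exact (sub_eq_zero.mp h).symm

theorem Representation.asModuleEquiv_of_smul {k H V : Type} [CommSemiring k] [Monoid H]
    [AddCommMonoid V] [Module k V] (ρ : Representation k H V) (h : H) (x : ρ.asModule) :
    ρ.asModuleEquiv (of k H h • x) = ρ h (ρ.asModuleEquiv x) := by
  rw [asModuleEquiv_map_smul, asAlgebraHom_of]

section bimodRep

variable {F G : Type} [Field F] [Group G] {P : Subgroup G}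

@[simp]
theorem bimodRep_apply (z : G × P) (x : MonoidAlgebra F G) :
    bimodRep F G P z x = of F G z.1 * x * of F G ((z.2 : G)⁻¹) :=
  (mul_assoc _ _ _).symm

theorem mem_fixedSub_iff_bimodRep_diag {x : MonoidAlgebra F G} :
    x ∈ FixedSub F G P ↔ ∀ u (hu : u ∈ P), bimodRep F G P (u, ⟨u, hu⟩) x = x := by
  simp only [bimodRep_apply]
  refine ⟨fun hx u hu => ?_, fun hx u hu => ?_⟩
  · rw [hx u hu, mul_assoc, ← map_mul, mul_inv_cancel, map_one, mul_one]
  · conv_rhs => rw [← hx u hu]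
    rw [mul_assoc _ (of F G u⁻¹), ← map_mul, inv_mul_cancel, map_one, mul_one]

noncomputable def bimodMulRight {c : MonoidAlgebra F G} (hc : c ∈ FixedSub F G P) :
    Module.End (MonoidAlgebra F (G × P)) (bimodRep F G P).asModule :=
  IntertwiningMap.equivLinearMapAsModule _ _
    ⟨LinearMap.mulRight F c, fun z => LinearMap.ext fun x => by
      simp only [LinearMap.comp_apply, LinearMap.mulRight_apply, bimodRep_apply]
      rw [mul_assoc, hc _ (P.inv_mem z.2.2)]
      simp only [mul_assoc]⟩

theorem asModuleEquiv_bimodMulRight {c : MonoidAlgebra F G} (hc : c ∈ FixedSub F G P)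
    (x : (bimodRep F G P).asModule) :
    (bimodRep F G P).asModuleEquiv (bimodMulRight hc x) = (bimodRep F G P).asModuleEquiv x * c :=
  rfl

theorem asModuleEquiv_mapDomain_inl_smul (c : MonoidAlgebra F G) (x : (bimodRep F G P).asModule) :
    (bimodRep F G P).asModuleEquiv (mapDomainAlgHom F F (MonoidHom.inl G P) c • x) =
      c * (bimodRep F G P).asModuleEquiv x := by
  have h : (bimodRep F G P).asAlgebraHom.comp (mapDomainAlgHom F F (MonoidHom.inl G P)) =
      Algebra.lmul F _ := by
    ext g x
    simp
  rw [asModuleEquiv_map_smul]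
  exact congr($h c ((bimodRep F G P).asModuleEquiv x))

theorem asModuleEquiv_mul_eq_self_of_mem_span {i : MonoidAlgebra F G} (hi : i ∈ FixedSub F G P)
    (hii : IsIdempotentElem i) {y : (bimodRep F G P).asModule}
    (hy : y ∈ span (MonoidAlgebra F (G × P)) {(bimodRep F G P).asModuleEquiv.symm i}) :
    (bimodRep F G P).asModuleEquiv y * i = (bimodRep F G P).asModuleEquiv y := by
  have hle : span (MonoidAlgebra F (G × P)) {(bimodRep F G P).asModuleEquiv.symm i} ≤
      LinearMap.eqLocus (bimodMulRight hi) 1 := by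
    refine (span_singleton_le_iff_mem _ _).mpr ((bimodRep F G P).asModuleEquiv.injective ?_)
    rw [asModuleEquiv_bimodMulRight, LinearEquiv.apply_symm_apply]
    exact hii.eq
  exact congr((bimodRep F G P).asModuleEquiv $(hle hy))

theorem asModuleEquiv_apply_generator_mem_fixedSub {i : MonoidAlgebra F G}
    (hi : i ∈ FixedSub F G P)
    (f : Module.End (MonoidAlgebra F (G × P))
      (span (MonoidAlgebra F (G × P)) {(bimodRep F G P).asModuleEquiv.symm i})) :
    (bimodRep F G P).asModuleEquiv (f ⟨_, mem_span_singleton_self _⟩) ∈ FixedSub F G P := by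
  refine mem_fixedSub_iff_bimodRep_diag.mpr fun u hu => ?_
  have hx₀ : of F (G × P) (u, ⟨u, hu⟩) • (⟨_, mem_span_singleton_self _⟩ :
      span (MonoidAlgebra F (G × P)) {(bimodRep F G P).asModuleEquiv.symm i}) =
      ⟨_, mem_span_singleton_self _⟩ := by
    refine Subtype.ext ((bimodRep F G P).asModuleEquiv.injective ?_)
    rw [coe_smul, asModuleEquiv_of_smul, LinearEquiv.apply_symm_apply]
    exact mem_fixedSub_iff_bimodRep_diag.mp hi u hu
  rw [← asModuleEquiv_of_smul, ← coe_smul, ← map_smul, hx₀]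

theorem eq_zero_or_self_of_isIdempotentElem_of_isPrimitiveIdempotent {i : MonoidAlgebra F G}
    {hi : i ∈ FixedSub F G P} (hprim : IsPrimitiveIdempotent (⟨i, hi⟩ : FixedSub F G P))
    (f : Module.End (MonoidAlgebra F (G × P))
      (span (MonoidAlgebra F (G × P)) {(bimodRep F G P).asModuleEquiv.symm i}))
    (hf : IsIdempotentElem f) :
    f ⟨_, mem_span_singleton_self _⟩ = 0 ∨
      f ⟨_, mem_span_singleton_self _⟩ = ⟨_, mem_span_singleton_self _⟩ := by
  revert f
  set e := (bimodRep F G P).asModuleEquiv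
  intro f hf
  set ι := mapDomainAlgHom F F (MonoidHom.inl G P)
  set x₀ : span (MonoidAlgebra F (G × P)) {e.symm i} := ⟨e.symm i, mem_span_singleton_self _⟩
  have hii : IsIdempotentElem i := congr_arg Subtype.val hprim.1.eq
  have he₀ : e x₀ = i := e.apply_symm_apply i
  set a := e (f x₀)
  have hιx₀ : ∀ c, e ↑(ι c • x₀) = c * i := fun c => by
    rw [coe_smul, asModuleEquiv_mapDomain_inl_smul, he₀]
  have hix₀ : ι i • x₀ = x₀ := Subtype.ext (e.injective (by rw [hιx₀, hii.eq, he₀]))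
  have hai : a * i = a := asModuleEquiv_mul_eq_self_of_mem_span hi hii (f x₀).2
  have hia : i * a = a := by
    rw [← asModuleEquiv_mapDomain_inl_smul, ← coe_smul, ← map_smul, hix₀]
  have hfx₀ : f x₀ = ι a • x₀ := Subtype.ext (e.injective (by rw [hιx₀, hai]))
  have haa : a * a = a := by
    rw [← asModuleEquiv_mapDomain_inl_smul, ← coe_smul, ← map_smul, ← hfx₀,
      ← Module.End.mul_apply, hf.eq]
  have haP : a ∈ FixedSub F G P := asModuleEquiv_apply_generator_mem_fixedSub hi f
  set aP : FixedSub F G P := ⟨a, haP⟩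
  have haa' : IsIdempotentElem aP := Subtype.ext haa
  have hai' : aP * ⟨i, hi⟩ = aP := Subtype.ext hai
  have hia' : ⟨i, hi⟩ * aP = aP := Subtype.ext hia
  rcases hprim.eq_zero_or_eq haa' hai' hia' with h | h
  · refine Or.inl (Subtype.ext (e.injective ?_))
    rw [ZeroMemClass.coe_zero, map_zero]
    exact congr_arg Subtype.val h
  · exact Or.inr (Subtype.ext (e.injective ((congr_arg Subtype.val h).trans he₀.symm)))

end bimodRep

theorem left_ideal_of_fixed_primitive_idempotent_indecomposable_general
    (F : Type) [Field F]
    (G : Type) [Group G] (P : Subgroup G)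
    (i : MonoidAlgebra F G) (hfix : ∀ u ∈ P, MonoidAlgebra.of F G u * i = i * MonoidAlgebra.of F G u)
    (hprim : IsPrimitiveIdempotent (⟨i, hfix⟩ : FixedSub F G P)) :
    IsIndecomposableModule (MonoidAlgebra F (G × P))
      (Submodule.span (MonoidAlgebra F (G × P))
        {((bimodRep F G P).asModuleEquiv.symm i)} : Submodule _ (bimodRep F G P).asModule) :=
  isIndecomposableModule_span_singleton
    ((bimodRep F G P).asModuleEquiv.symm.map_ne_zero_iff.mpr fun h => hprim.2.1 (Subtype.ext h))
    (eq_zero_or_self_of_isIdempotentElem_of_isPrimitiveIdempotent hprim)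

/-- If `i` is a primitive idempotent of `(FG)^P`, then the `F[G × P]`-module `FGi`
(with `G` acting by left translation and `P` by right translation) is indecomposable.
`FGi` is realised as the `F[G × P]`-submodule of `FG` generated by `i`. -/
theorem left_ideal_of_fixed_primitive_idempotent_indecomposable
    (p : ℕ) [Fact p.Prime] (F : Type) [Field F] [CharP F p]
    (G : Type) [Group G] [Fintype G] (P : Subgroup G) (hP : IsPGroup p P)
    (i : MonoidAlgebra F G) (hfix : ∀ u ∈ P, MonoidAlgebra.of F G u * i = i * MonoidAlgebra.of F G u)
    (hprim : IsPrimitiveIdempotent (⟨i, hfix⟩ : FixedSub F G P)) :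
    IsIndecomposableModule (MonoidAlgebra F (G × P))
      (Submodule.span (MonoidAlgebra F (G × P))
        {((bimodRep F G P).asModuleEquiv.symm i)} : Submodule _ (bimodRep F G P).asModule) :=
  left_ideal_of_fixed_primitive_idempotent_indecomposable_general F G P i hfix hprim
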